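/- Let R > 0 and let f₋, f₊ : [0,R] → ℝ be continuous on [0,R], C² on (0,R), solve system (S) on (0,R), and satisfy f₋(0) = f₊(0) = 0, f₋(R) = 1, f₊(R) = 0. Then the potential energy bound 2 ∫₀^R W(f₋(r), f₊(r)) r dr ≤ 1 holds. -/

import Mathlib

open MeasureTheory

/-- The radial Laplacian `Δ_r u(r) = u''(r) + u'(r)/r`. -/
noncomputable def radLap (f : ℝ → ℝ) (r : ℝ) : ℝ := deriv (deriv f) r + deriv f r / r

/-- System (S): the equivariant isotropic p-wave Ginzburg–Landau system with degrees (-1, 1). -/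
def SystemS (fm fp : ℝ → ℝ) (r : ℝ) : Prop :=
  radLap fm r - fm r / r ^ 2 + (1 / 2) * (radLap fp r - fp r / r ^ 2)
      = fm r * (fm r ^ 2 - 1) + 2 * fm r * fp r ^ 2 ∧
  radLap fp r - fp r / r ^ 2 + (1 / 2) * (radLap fm r - fm r / r ^ 2)
      = fp r * (fp r ^ 2 - 1) + 2 * fp r * fm r ^ 2

/-- The normalized radial potential density `W(f₋,f₊) = ½(f₋²+f₊²−1)² + f₋²f₊²`. -/
noncomputable def Wpot (x y : ℝ) : ℝ := (1 / 2) * (x ^ 2 + y ^ 2 - 1) ^ 2 + x ^ 2 * y ^ 2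

/-!
Pohozaev argument. With `Q = f₋² + f₊² + f₋f₊` (the coupling form of (S)), `P` the same form in
the derivatives, and `G = r²P − Q − r²W`, the system gives `G' = −2rW`, so
`2∫ₐᵇ W r dr = G(a) − G(b)`. At the outer end `−G(b) ≤ Q(b) + b²W(b) → 1` as `b → R`. At the
inner end `G` has a limit `L` because `W r` is integrable, and `L ≤ 0`: otherwise `r²P > L/2`
near `0`, and the system turns this into `(rQ')' ≥ L/r − r/2`, which forces
`Q ≥ (L/2) log² r + O(|log r|) → ∞`, contradicting the continuity of `f±` at `0`.
-/

open Filter Topology Set Real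

lemma exists_eventually_le_of_hasDerivAt_nonneg {f f' : ℝ → ℝ}
    (h : ∀ᶠ r in 𝓝[>] 0, HasDerivAt f (f' r) r ∧ 0 ≤ f' r) :
    ∃ C, ∀ᶠ s in 𝓝[>] 0, f s ≤ C := by
  obtain ⟨δ, hδ, hδf⟩ := (nhdsGT_basis (0 : ℝ)).eventually_iff.mp h
  have hmono : MonotoneOn f (Ioo 0 δ) := by
    refine monotoneOn_of_hasDerivWithinAt_nonneg (f' := f') (convex_Ioo 0 δ)
      (fun x hx ↦ (hδf hx).1.continuousAt.continuousWithinAt) (fun x hx ↦ ?_) fun x hx ↦ ?_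
    · exact (hδf (interior_subset hx)).1.hasDerivWithinAt
    · exact (hδf (interior_subset hx)).2
  refine ⟨f (δ / 2), ?_⟩
  filter_upwards [Ioo_mem_nhdsGT (half_pos hδ)] with s hs
  exact hmono ⟨hs.1, hs.2.trans (half_lt_self hδ)⟩ ⟨half_pos hδ, half_lt_self hδ⟩ hs.2.le

lemma exists_eventually_le_log_of_hasDerivAt_ge {φ φ' : ℝ → ℝ} {η c : ℝ} (hc : 0 ≤ c)
    (h : ∀ᶠ r in 𝓝[>] 0, HasDerivAt φ (φ' r) r ∧ η / r - c * r ≤ φ' r) :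
    ∃ C, ∀ᶠ s in 𝓝[>] 0, φ s ≤ η * log s + C := by
  obtain ⟨C, hC⟩ := exists_eventually_le_of_hasDerivAt_nonneg
    (f := fun s ↦ φ s - η * log s + c * s ^ 2 / 2) (f' := fun r ↦ φ' r - η / r + c * r) <| by
    filter_upwards [h, self_mem_nhdsWithin] with r ⟨hφ, hle⟩ (hr : 0 < r)
    refine ⟨?_, by linarith⟩
    have hlog := (hasDerivAt_log hr.ne').const_mul η
    have hsq := ((hasDerivAt_pow 2 r).const_mul c).div_const 2
    refine ((hφ.fun_sub hlog).fun_add hsq).congr_deriv ?_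
    field_simp
    ring
  refine ⟨C, ?_⟩
  filter_upwards [hC] with s hs
  nlinarith [sq_nonneg s]

lemma tendsto_atTop_of_mul_hasDerivAt_le_log {Q Q' : ℝ → ℝ} {η C : ℝ} (hη : 0 < η)
    (h : ∀ᶠ s in 𝓝[>] 0, HasDerivAt Q (Q' s) s ∧ s * Q' s ≤ η * log s + C) :
    Tendsto Q (𝓝[>] 0) atTop := by
  obtain ⟨C', hC'⟩ := exists_eventually_le_of_hasDerivAt_nonneg
    (f := fun s ↦ C * log s + η / 2 * log s ^ 2 - Q s)
    (f' := fun r ↦ (η * log r + C - r * Q' r) / r) <| by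
    filter_upwards [h, self_mem_nhdsWithin] with r ⟨hQ, hle⟩ (hr : 0 < r)
    refine ⟨?_, div_nonneg (by linarith) hr.le⟩
    have hlog := hasDerivAt_log hr.ne'
    refine (((hlog.const_mul C).fun_add ((hlog.fun_pow 2).const_mul (η / 2))).fun_sub
      hQ).congr_deriv ?_
    field_simp
    ring
  have hpoly : Tendsto (fun u : ℝ ↦ u * (C + η / 2 * u) - C') atBot atTop :=
    tendsto_atTop_add_const_right _ _ <| tendsto_id.atBot_mul_atBot₀ <|
      tendsto_atBot_add_const_left _ C (tendsto_id.const_mul_atBot (half_pos hη))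
  refine tendsto_atTop_mono' _ ?_ (hpoly.comp tendsto_log_nhdsGT_zero)
  filter_upwards [hC'] with s hs
  simp only [Function.comp_apply]
  linarith

lemma tendsto_atTop_of_hasDerivAt_mul_deriv_ge {Q Q' φ' : ℝ → ℝ} {η c : ℝ} (hη : 0 < η)
    (hc : 0 ≤ c) (hQ : ∀ᶠ r in 𝓝[>] 0, HasDerivAt Q (Q' r) r)
    (hφ : ∀ᶠ r in 𝓝[>] 0, HasDerivAt (fun s ↦ s * Q' s) (φ' r) r ∧ η / r - c * r ≤ φ' r) :
    Tendsto Q (𝓝[>] 0) atTop := by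
  obtain ⟨C, hC⟩ := exists_eventually_le_log_of_hasDerivAt_ge hc hφ
  exact tendsto_atTop_of_mul_hasDerivAt_le_log hη (hQ.and hC)

def couplingForm (x y : ℝ) : ℝ := x ^ 2 + y ^ 2 + x * y

def couplingPolar (x y u v : ℝ) : ℝ := 2 * x * u + 2 * y * v + x * v + y * u

lemma couplingForm_nonneg (x y : ℝ) : 0 ≤ couplingForm x y := by
  unfold couplingForm
  nlinarith [sq_nonneg (x + y)]

lemma Wpot_nonneg (x y : ℝ) : 0 ≤ Wpot x y := by
  unfold Wpot
  positivity

/-- `½ (x ∂ₓ + y ∂ᵧ) Wpot`. -/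
def virialWpot (x y : ℝ) : ℝ := (x ^ 2 + y ^ 2) * (x ^ 2 + y ^ 2 - 1) + 2 * x ^ 2 * y ^ 2

lemma neg_quarter_le_virialWpot (x y : ℝ) : -(1 / 4) ≤ virialWpot x y := by
  unfold virialWpot
  nlinarith [sq_nonneg (x ^ 2 + y ^ 2 - 1 / 2), sq_nonneg (x * y)]

section Derivatives

variable {f g : ℝ → ℝ} {f' g' r : ℝ}

lemma HasDerivAt.couplingForm (hf : HasDerivAt f f' r) (hg : HasDerivAt g g' r) :
    HasDerivAt (fun s ↦ couplingForm (f s) (g s)) (couplingPolar (f r) (g r) f' g') r := by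
  unfold _root_.couplingForm couplingPolar
  refine (((hf.fun_pow 2).fun_add (hg.fun_pow 2)).fun_add (hf.fun_mul hg)).congr_deriv ?_
  ring

lemma HasDerivAt.couplingPolar {u v : ℝ → ℝ} {u' v' : ℝ} (hf : HasDerivAt f f' r)
    (hg : HasDerivAt g g' r) (hu : HasDerivAt u u' r) (hv : HasDerivAt v v' r) :
    HasDerivAt (fun s ↦ couplingPolar (f s) (g s) (u s) (v s))
      (couplingPolar f' g' (u r) (v r) + couplingPolar (f r) (g r) u' v') r := by
  unfold _root_.couplingPolar
  refine ((((hf.const_mul 2).fun_mul hu).fun_add ((hg.const_mul 2).fun_mul hv)).fun_add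
    (hf.fun_mul hv) |>.fun_add (hg.fun_mul hu)).congr_deriv ?_
  ring

lemma HasDerivAt.wpot (hf : HasDerivAt f f' r) (hg : HasDerivAt g g' r) :
    HasDerivAt (fun s ↦ Wpot (f s) (g s))
      (2 * (f r * (f r ^ 2 - 1) + 2 * f r * g r ^ 2) * f'
        + 2 * (g r * (g r ^ 2 - 1) + 2 * g r * f r ^ 2) * g') r := by
  unfold Wpot
  have hsum := ((hf.fun_pow 2).fun_add (hg.fun_pow 2)).sub_const 1
  refine (((hsum.fun_pow 2).const_mul (1 / 2)).fun_add
    ((hf.fun_pow 2).fun_mul (hg.fun_pow 2))).congr_deriv ?_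
  ring

end Derivatives

structure IsSolutionAt (fm fp : ℝ → ℝ) (r : ℝ) : Prop where
  differentiableAt_fm : DifferentiableAt ℝ fm r
  differentiableAt_fp : DifferentiableAt ℝ fp r
  differentiableAt_deriv_fm : DifferentiableAt ℝ (deriv fm) r
  differentiableAt_deriv_fp : DifferentiableAt ℝ (deriv fp) r
  systemS : SystemS fm fp r

lemma isSolutionAt_of_contDiffOn {fm fp : ℝ → ℝ} {U : Set ℝ} {r : ℝ} (hU : IsOpen U)
    (hfm : ContDiffOn ℝ 2 fm U) (hfp : ContDiffOn ℝ 2 fp U) (hr : r ∈ U) (hS : SystemS fm fp r) :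
    IsSolutionAt fm fp r where
  differentiableAt_fm := (hfm.contDiffAt (hU.mem_nhds hr)).differentiableAt two_ne_zero
  differentiableAt_fp := (hfp.contDiffAt (hU.mem_nhds hr)).differentiableAt two_ne_zero
  differentiableAt_deriv_fm :=
    ((hfm.deriv_of_isOpen hU le_rfl).contDiffAt (hU.mem_nhds hr)).differentiableAt one_ne_zero
  differentiableAt_deriv_fp :=
    ((hfp.deriv_of_isOpen hU le_rfl).contDiffAt (hU.mem_nhds hr)).differentiableAt one_ne_zero
  systemS := hS

noncomputable def pohozaev (fm fp : ℝ → ℝ) (r : ℝ) : ℝ :=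
  r ^ 2 * couplingForm (deriv fm r) (deriv fp r) - couplingForm (fm r) (fp r)
    - r ^ 2 * Wpot (fm r) (fp r)

namespace IsSolutionAt

variable {fm fp : ℝ → ℝ} {r : ℝ}

lemma deriv_deriv_eq (h : IsSolutionAt fm fp r) :
    deriv (deriv fm) r = (4 * (fm r * (fm r ^ 2 - 1) + 2 * fm r * fp r ^ 2)
        - 2 * (fp r * (fp r ^ 2 - 1) + 2 * fp r * fm r ^ 2)) / 3
        - deriv fm r / r + fm r / r ^ 2 ∧
    deriv (deriv fp) r = (4 * (fp r * (fp r ^ 2 - 1) + 2 * fp r * fm r ^ 2)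
        - 2 * (fm r * (fm r ^ 2 - 1) + 2 * fm r * fp r ^ 2)) / 3
        - deriv fp r / r + fp r / r ^ 2 := by
  obtain ⟨e₁, e₂⟩ := h.systemS
  simp only [radLap] at e₁ e₂
  constructor <;> linarith

lemma hasDerivAt_pohozaev (h : IsSolutionAt fm fp r) (hr : r ≠ 0) :
    HasDerivAt (pohozaev fm fp) (-(2 * r * Wpot (fm r) (fp r))) r := by
  have h₁ := h.differentiableAt_fm.hasDerivAt
  have h₂ := h.differentiableAt_fp.hasDerivAt
  have hP := h.differentiableAt_deriv_fm.hasDerivAt.couplingForm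
    h.differentiableAt_deriv_fp.hasDerivAt
  have hr2 := hasDerivAt_pow 2 r
  refine (((hr2.fun_mul hP).fun_sub (h₁.couplingForm h₂)).fun_sub
    (hr2.fun_mul (h₁.wpot h₂))).congr_deriv ?_
  obtain ⟨d₁, d₂⟩ := h.deriv_deriv_eq
  simp only [couplingPolar, couplingForm, Wpot, d₁, d₂]
  field_simp
  ring

lemma hasDerivAt_mul_couplingPolar (h : IsSolutionAt fm fp r) (hr : r ≠ 0) :
    HasDerivAt (fun s ↦ s * couplingPolar (fm s) (fp s) (deriv fm s) (deriv fp s))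
      (2 * r * couplingForm (deriv fm r) (deriv fp r) + 2 * couplingForm (fm r) (fp r) / r
        + 2 * r * virialWpot (fm r) (fp r)) r := by
  have hφ := h.differentiableAt_fm.hasDerivAt.couplingPolar h.differentiableAt_fp.hasDerivAt
    h.differentiableAt_deriv_fm.hasDerivAt h.differentiableAt_deriv_fp.hasDerivAt
  refine ((hasDerivAt_id r).fun_mul hφ).congr_deriv ?_
  obtain ⟨d₁, d₂⟩ := h.deriv_deriv_eq
  simp only [couplingPolar, couplingForm, virialWpot, d₁, d₂, id]
  field_simp
  ring

end IsSolutionAt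

section Pohozaev

variable {fm fp : ℝ → ℝ}

lemma neg_pohozaev_le (r : ℝ) :
    -pohozaev fm fp r ≤ couplingForm (fm r) (fp r) + r ^ 2 * Wpot (fm r) (fp r) := by
  have := mul_nonneg (sq_nonneg r) (couplingForm_nonneg (deriv fm r) (deriv fp r))
  unfold pohozaev
  linarith

lemma two_mul_integral_eq_pohozaev_sub {a b : ℝ} (ha : 0 < a) (hab : a ≤ b)
    (hsol : ∀ r ∈ Icc a b, IsSolutionAt fm fp r) :
    2 * ∫ r in a..b, Wpot (fm r) (fp r) * r = pohozaev fm fp a - pohozaev fm fp b := by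
  rw [← uIcc_of_le hab] at hsol
  have hderiv : ∀ r ∈ uIcc a b,
      HasDerivAt (fun s ↦ -pohozaev fm fp s / 2) (Wpot (fm r) (fp r) * r) r := fun r hr ↦
    (((hsol r hr).hasDerivAt_pohozaev (ha.trans_le (uIcc_of_le hab ▸ hr).1).ne').neg.div_const
      2).congr_deriv (by ring)
  have hcont : ContinuousOn (fun r ↦ Wpot (fm r) (fp r) * r) (uIcc a b) := fun r hr ↦
    (((hsol r hr).differentiableAt_fm.hasDerivAt.wpot
      (hsol r hr).differentiableAt_fp.hasDerivAt).continuousAt.mul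
        continuousAt_id).continuousWithinAt
  rw [intervalIntegral.integral_eq_sub_of_hasDerivAt hderiv hcont.intervalIntegrable]
  ring

lemma tendsto_pohozaev_nhdsGT_zero {b : ℝ} (hb : 0 < b)
    (hsol : ∀ r ∈ Ioc 0 b, IsSolutionAt fm fp r)
    (hcm : ContinuousOn fm (Icc 0 b)) (hcp : ContinuousOn fp (Icc 0 b)) :
    Tendsto (pohozaev fm fp) (𝓝[>] 0)
      (𝓝 (pohozaev fm fp b + 2 * ∫ r in 0..b, Wpot (fm r) (fp r) * r)) := by
  have hcont : ContinuousOn (fun r ↦ Wpot (fm r) (fp r) * r) (uIcc 0 b) := by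
    rw [uIcc_of_le hb.le]
    unfold Wpot
    fun_prop
  have hprim : ContinuousWithinAt (fun a ↦ ∫ r in a..b, Wpot (fm r) (fp r) * r) (Ioi 0) 0 := by
    rw [← continuousWithinAt_Ioo_iff_Ioi hb]
    refine (intervalIntegral.continuousOn_primitive_interval_left (μ := volume)
      hcont.integrableOn_uIcc 0 left_mem_uIcc).mono ?_
    rw [uIcc_of_le hb.le]
    exact Ioo_subset_Icc_self
  refine (tendsto_const_nhds.add (hprim.tendsto.const_mul 2)).congr' ?_
  filter_upwards [Ioo_mem_nhdsGT hb] with a ha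
  linarith [two_mul_integral_eq_pohozaev_sub ha.1 ha.2.le fun r hr ↦
    hsol r ⟨ha.1.trans_le hr.1, hr.2⟩]

lemma nonpos_of_tendsto_pohozaev {L : ℝ} (hsol : ∀ᶠ r in 𝓝[>] 0, IsSolutionAt fm fp r)
    (hm0 : ContinuousWithinAt fm (Ioi 0) 0) (hp0 : ContinuousWithinAt fp (Ioi 0) 0)
    (hL : Tendsto (pohozaev fm fp) (𝓝[>] 0) (𝓝 L)) : L ≤ 0 := by
  by_contra! hL0
  have hQ : Tendsto (fun r ↦ couplingForm (fm r) (fp r)) (𝓝[>] 0) atTop := by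
    refine tendsto_atTop_of_hasDerivAt_mul_deriv_ge hL0 (c := 1 / 2) (by norm_num)
      (Q' := fun s ↦ couplingPolar (fm s) (fp s) (deriv fm s) (deriv fp s))
      (φ' := fun r ↦ 2 * r * couplingForm (deriv fm r) (deriv fp r)
        + 2 * couplingForm (fm r) (fp r) / r
        + 2 * r * virialWpot (fm r) (fp r)) ?_ ?_
    · filter_upwards [hsol] with r h
      exact h.differentiableAt_fm.hasDerivAt.couplingForm h.differentiableAt_fp.hasDerivAt
    filter_upwards [hsol, self_mem_nhdsWithin, hL.eventually (lt_mem_nhds (half_lt_self hL0))]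
      with r h (hr : 0 < r) hG
    refine ⟨h.hasDerivAt_mul_couplingPolar hr.ne', ?_⟩
    have hkin : L / r ≤ 2 * r * couplingForm (deriv fm r) (deriv fp r) := by
      rw [div_le_iff₀ hr]
      unfold pohozaev at hG
      nlinarith [couplingForm_nonneg (fm r) (fp r), Wpot_nonneg (fm r) (fp r)]
    have hmass : 0 ≤ 2 * couplingForm (fm r) (fp r) / r :=
      div_nonneg (mul_nonneg zero_le_two (couplingForm_nonneg _ _)) hr.le
    nlinarith [mul_le_mul_of_nonneg_left (neg_quarter_le_virialWpot (fm r) (fp r)) hr.le]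
  have hQ0 : ContinuousWithinAt (fun r ↦ couplingForm (fm r) (fp r)) (Ioi 0) 0 :=
    ((hm0.pow 2).add (hp0.pow 2)).add (hm0.mul hp0)
  exact not_tendsto_atTop_of_tendsto_nhds hQ0.tendsto hQ

lemma two_mul_integral_le_neg_pohozaev {b : ℝ} (hb : 0 < b)
    (hsol : ∀ r ∈ Ioc 0 b, IsSolutionAt fm fp r)
    (hcm : ContinuousOn fm (Icc 0 b)) (hcp : ContinuousOn fp (Icc 0 b)) :
    2 * ∫ r in 0..b, Wpot (fm r) (fp r) * r ≤ -pohozaev fm fp b := by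
  have hcont : ∀ {f : ℝ → ℝ}, ContinuousOn f (Icc 0 b) → ContinuousWithinAt f (Ioi 0) 0 :=
    fun hf ↦ (continuousWithinAt_Ioo_iff_Ioi hb).mp
      ((hf 0 (left_mem_Icc.mpr hb.le)).mono Ioo_subset_Icc_self)
  have hsol0 : ∀ᶠ r in 𝓝[>] 0, IsSolutionAt fm fp r := by
    filter_upwards [Ioo_mem_nhdsGT hb] with r hr
    exact hsol r (Ioo_subset_Ioc_self hr)
  linarith [nonpos_of_tendsto_pohozaev hsol0 (hcont hcm) (hcont hcp)
    (tendsto_pohozaev_nhdsGT_zero hb hsol hcm hcp)]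

lemma two_mul_integral_le_of_isSolutionAt {R : ℝ} (hR : 0 < R)
    (hsol : ∀ r ∈ Ioo 0 R, IsSolutionAt fm fp r)
    (hcm : ContinuousOn fm (Icc 0 R)) (hcp : ContinuousOn fp (Icc 0 R)) :
    2 * ∫ r in Ioo 0 R, Wpot (fm r) (fp r) * r
      ≤ couplingForm (fm R) (fp R) + R ^ 2 * Wpot (fm R) (fp R) := by
  have hbound : ∀ b ∈ Ioo 0 R, 2 * ∫ r in 0..b, Wpot (fm r) (fp r) * r
      ≤ couplingForm (fm b) (fp b) + b ^ 2 * Wpot (fm b) (fp b) := fun b hb ↦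
    (two_mul_integral_le_neg_pohozaev hb.1 (fun r hr ↦ hsol r ⟨hr.1, hr.2.trans_lt hb.2⟩)
      (hcm.mono (Icc_subset_Icc_right hb.2.le)) (hcp.mono (Icc_subset_Icc_right hb.2.le))).trans
      (neg_pohozaev_le b)
  have hW : ContinuousOn (fun r ↦ Wpot (fm r) (fp r) * r) (uIcc 0 R) := by
    rw [uIcc_of_le hR.le]
    unfold Wpot
    fun_prop
  have hQW : ContinuousOn (fun b ↦ couplingForm (fm b) (fp b) + b ^ 2 * Wpot (fm b) (fp b))
      (Icc 0 R) := by
    unfold couplingForm Wpot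
    fun_prop
  have hprim := intervalIntegral.continuousOn_primitive_interval (μ := volume)
    hW.integrableOn_uIcc
  rw [uIcc_of_le hR.le] at hprim
  have hRmem : R ∈ Icc 0 R := right_mem_Icc.2 hR.le
  rw [← integral_Ioc_eq_integral_Ioo, ← intervalIntegral.integral_of_le hR.le]
  exact ContinuousWithinAt.closure_le (closure_Ioo hR.ne ▸ hRmem)
    (((hprim R hRmem).mono Ioo_subset_Icc_self).const_mul 2)
    ((hQW R hRmem).mono Ioo_subset_Icc_self) hbound

end Pohozaev

theorem stmt5_general (R : ℝ) (hR : 0 < R) (fm fp : ℝ → ℝ)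
    (hcm : ContinuousOn fm (Set.Icc 0 R)) (hcp : ContinuousOn fp (Set.Icc 0 R))
    (hfm : ContDiffOn ℝ 2 fm (Set.Ioo 0 R)) (hfp : ContDiffOn ℝ 2 fp (Set.Ioo 0 R))
    (hS : ∀ r ∈ Set.Ioo 0 R, SystemS fm fp r)
    (hRm : fm R = 1) (hRp : fp R = 0) :
    2 * ∫⁻ r in Set.Ioo 0 R, ENNReal.ofReal (Wpot (fm r) (fp r) * r) ≤ 1 := by
  have hint : 2 * ∫ r in Ioo 0 R, Wpot (fm r) (fp r) * r ≤ 1 := by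
    simpa [couplingForm, Wpot, hRm, hRp] using two_mul_integral_le_of_isSolutionAt hR
      (fun r hr ↦ isSolutionAt_of_contDiffOn isOpen_Ioo hfm hfp hr (hS r hr)) hcm hcp
  have hWr : ContinuousOn (fun r ↦ Wpot (fm r) (fp r) * r) (Icc 0 R) := by
    unfold Wpot
    fun_prop
  rw [← ofReal_integral_eq_lintegral_ofReal (hWr.integrableOn_Icc.mono_set Ioo_subset_Icc_self)
    (ae_restrict_of_forall_mem measurableSet_Ioo fun r hr ↦ mul_nonneg (Wpot_nonneg _ _) hr.1.le)]
  calc 2 * ENNReal.ofReal (∫ r in Ioo 0 R, Wpot (fm r) (fp r) * r)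
      = ENNReal.ofReal (2 * ∫ r in Ioo 0 R, Wpot (fm r) (fp r) * r) := by
        rw [ENNReal.ofReal_mul zero_le_two, ENNReal.ofReal_ofNat]
    _ ≤ 1 := ENNReal.ofReal_le_one.mpr hint

theorem stmt5 (R : ℝ) (hR : 0 < R) (fm fp : ℝ → ℝ)
    (hcm : ContinuousOn fm (Set.Icc 0 R)) (hcp : ContinuousOn fp (Set.Icc 0 R))
    (hfm : ContDiffOn ℝ 2 fm (Set.Ioo 0 R)) (hfp : ContDiffOn ℝ 2 fp (Set.Ioo 0 R))
    (hS : ∀ r ∈ Set.Ioo 0 R, SystemS fm fp r)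
    (h0m : fm 0 = 0) (h0p : fp 0 = 0) (hRm : fm R = 1) (hRp : fp R = 0) :
    2 * ∫⁻ r in Set.Ioo 0 R, ENNReal.ofReal (Wpot (fm r) (fp r) * r) ≤ 1 :=
  stmt5_general R hR fm fp hcm hcp hfm hfp hS hRm hRp
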